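/- arXiv:1701.04341 — 5 statements merged into one kernel-verified Lean document; each statement's English description precedes it below -/
import Mathlib

section
/- Let K be an algebraically closed field and 𝔭 a prime ideal of K[X₁,…,Xₙ] of positive Krull dimension. Then the set T := {(a₁,…,aₙ) ∈ Kⁿ : there exists λ ∈ K with a₁X₁+⋯+aₙXₙ+λ ∈ 𝔭} is a proper linear subspace of Kⁿ. -/
open MvPolynomial

lemma sub_C_eval_mem_of_gens_mem {K : Type*} [Field K] {n : ℕ}
    (𝔭 : Ideal (MvPolynomial (Fin n) K)) (x : Fin n → K)
    (hgen : ∀ i : Fin n, (X i - C (x i) : MvPolynomial (Fin n) K) ∈ 𝔭)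
    (p : MvPolynomial (Fin n) K) : p - C (eval x p) ∈ 𝔭 := by
  induction p using MvPolynomial.induction_on with
  | C a => simp
  | add p q hp hq =>
      have := Ideal.add_mem 𝔭 hp hq
      simpa [map_add, sub_add_sub_comm] using this
  | mul_X p i hp =>
      have h1 : p * (X i - C (x i)) ∈ 𝔭 := Ideal.mul_mem_left 𝔭 _ (hgen i)
      have h2 : C (x i) * (p - C (eval x p)) ∈ 𝔭 := Ideal.mul_mem_left 𝔭 _ hp
      have := Ideal.add_mem 𝔭 h1 h2
      have heq : p * X i - C (eval x (p * X i)) =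
          p * (X i - C (x i)) + C (x i) * (p - C (eval x p)) := by
        simp only [map_mul, eval_X]
        ring
      rw [heq]; exact this

/-- For a prime ideal `𝔭` of `K[X₁,…,Xₙ]` of positive Krull dimension, the set
`T = {a ∈ Kⁿ : ∃ λ, a₁X₁+⋯+aₙXₙ+λ ∈ 𝔭}` is a proper linear subspace of `Kⁿ`. -/
theorem coefficients_of_affine_forms_in_prime_proper_subspace
    {K : Type*} [Field K] [IsAlgClosed K] {n : ℕ}
    (𝔭 : Ideal (MvPolynomial (Fin n) K)) (hp : 𝔭.IsPrime)
    (hdim : 0 < ringKrullDim (MvPolynomial (Fin n) K ⧸ 𝔭)) :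
    ∃ W : Submodule K (Fin n → K), W ≠ ⊤ ∧
      (W : Set (Fin n → K)) =
        {a : Fin n → K | ∃ lam : K,
          (∑ i : Fin n, MvPolynomial.C (a i) * MvPolynomial.X i) + MvPolynomial.C lam ∈ 𝔭} := by
  set T : Set (Fin n → K) :=
    {a : Fin n → K | ∃ lam : K,
      (∑ i : Fin n, MvPolynomial.C (a i) * MvPolynomial.X i) + MvPolynomial.C lam ∈ 𝔭} with hT
  have hW : ∃ W : Submodule K (Fin n → K), (W : Set (Fin n → K)) = T := by
    refine ⟨{ carrier := T, add_mem' := ?_, zero_mem' := ?_, smul_mem' := ?_ }, rfl⟩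
    · rintro a b ⟨la, hla⟩ ⟨lb, hlb⟩
      refine ⟨la + lb, ?_⟩
      have := Ideal.add_mem 𝔭 hla hlb
      have heq : (∑ i : Fin n, (C ((a + b) i) * X i : MvPolynomial (Fin n) K)) + C (la + lb)
          = ((∑ i : Fin n, C (a i) * X i) + C la) + ((∑ i : Fin n, C (b i) * X i) + C lb) := by
        simp [Finset.sum_add_distrib, map_add, add_mul]
        ring
      rw [heq]; exact this
    · exact ⟨0, by simp⟩
    · rintro c a ⟨la, hla⟩
      refine ⟨c * la, ?_⟩
      have := Ideal.mul_mem_left 𝔭 (C c) hla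
      have heq : (∑ i : Fin n, (C ((c • a) i) * X i : MvPolynomial (Fin n) K)) + C (c * la)
          = C c * ((∑ i : Fin n, C (a i) * X i) + C la) := by
        simp [Finset.mul_sum, mul_assoc, map_mul, mul_add]
      rw [heq]; exact this
  obtain ⟨W, hWT⟩ := hW
  refine ⟨W, ?_, hWT⟩
  intro htop
  -- every standard basis vector is in T
  have hbasis : ∀ i : Fin n, ∃ lam : K, (X i + C lam : MvPolynomial (Fin n) K) ∈ 𝔭 := by
    intro i
    have : (Pi.single i 1 : Fin n → K) ∈ T := by
      rw [← hWT, htop]; trivial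
    obtain ⟨lam, hlam⟩ := this
    refine ⟨lam, ?_⟩
    have heq : (∑ j : Fin n, (C ((Pi.single i 1 : Fin n → K) j) * X j : MvPolynomial (Fin n) K))
        = X i := by
      have hz : ∀ j : Fin n, j ≠ i →
          (C ((Pi.single i 1 : Fin n → K) j) * X j : MvPolynomial (Fin n) K) = 0 := by
        intro j hj; simp [Pi.single_eq_of_ne hj]
      rw [Fintype.sum_eq_single i hz]
      simp
    rwa [heq] at hlam
  choose lam hlam using hbasis
  set x : Fin n → K := fun i => -lam i with hx
  have hgen : ∀ i : Fin n, (X i - C (x i) : MvPolynomial (Fin n) K) ∈ 𝔭 := by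
    intro i
    simpa [hx, sub_neg_eq_add] using hlam i
  -- vanishingIdeal {x} ≤ 𝔭
  have hle : MvPolynomial.vanishingIdeal K ({x} : Set (Fin n → K)) ≤ 𝔭 := by
    intro p hpmem
    have h0 : eval x p = 0 := by
      simpa using (MvPolynomial.mem_vanishingIdeal_singleton_iff x p).mp hpmem
    have := sub_C_eval_mem_of_gens_mem 𝔭 x hgen p
    rwa [h0, map_zero, sub_zero] at this
  have hmax : (MvPolynomial.vanishingIdeal K ({x} : Set (Fin n → K))).IsMaximal :=
    inferInstance
  have heq𝔭 : 𝔭 = MvPolynomial.vanishingIdeal K ({x} : Set (Fin n → K)) :=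
    ((hmax.eq_of_le hp.ne_top hle)).symm
  have : 𝔭.IsMaximal := heq𝔭 ▸ hmax
  have hfield : IsField (MvPolynomial (Fin n) K ⧸ 𝔭) :=
    (Ideal.Quotient.maximal_ideal_iff_isField_quotient 𝔭).mp this
  have := ringKrullDim_eq_zero_of_isField hfield
  rw [this] at hdim
  exact lt_irrefl _ hdim
end

section
/- Let K be an algebraically closed field, 𝔞 ⊂ K[X₁,…,Xₙ] an equidimensional ideal of dimension m ≥ 1 and f₁,…,f_m a secant sequence for 𝔞 such that for every primary component 𝔮ᵢ of 𝔞 whose associated prime 𝔭ᵢ satisfies that the map f restricted to V(𝔭ᵢ) is not dominant onto 𝔸ᵐ, there exists a nonzero polynomial Qᵢ ∈ K[Y₁,…,Y_m] with Qᵢ(f₁,…,f_m) ∈ 𝔮ᵢ. -/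
open MvPolynomial

/-- Lemma `primarias-jugando` i): Let `𝔞` be an equidimensional ideal of
dimension `m ≥ 1` with secant sequence `f₁,…,f_m`, and let `𝔮` be a primary component of
`𝔞` (a primary ideal containing `𝔞`) such that the map `f` restricted to `V(√𝔮)` is not
dominant onto `𝔸^m`. Then there is a nonzero polynomial `Q ∈ K[Y₁,…,Y_m]` with
`Q(f₁,…,f_m) ∈ 𝔮`. -/
theorem exists_poly_in_primary_of_not_dominant {K : Type*} [Field K] [IsAlgClosed K]
    {n m : ℕ} (hm : 1 ≤ m) (𝔞 : Ideal (MvPolynomial (Fin n) K)) (h𝔞 : 𝔞 ≠ ⊤)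
    (hequi : ∀ 𝔭 ∈ 𝔞.minimalPrimes,
      ringKrullDim (MvPolynomial (Fin n) K ⧸ 𝔭) = (m : WithBot ℕ∞))
    (f : Fin m → MvPolynomial (Fin n) K)
    (hsec : ∀ j : ℕ, 1 ≤ j → j ≤ m →
      ringKrullDim (MvPolynomial (Fin n) K ⧸
          (𝔞 ⊔ Ideal.span (f '' {i : Fin m | (i : ℕ) < j}))) = ((m - j : ℕ) : WithBot ℕ∞))
    (𝔮 : Ideal (MvPolynomial (Fin n) K)) (h𝔮 : 𝔮.IsPrimary) (h𝔞𝔮 : 𝔞 ≤ 𝔮)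
    (hnotdom : ¬ (∀ G : MvPolynomial (Fin m) K,
      (∀ x : Fin n → K, (∀ g ∈ 𝔮.radical, MvPolynomial.eval x g = 0) →
        MvPolynomial.eval (fun i => MvPolynomial.eval x (f i)) G = 0) → G = 0)) :
    ∃ Q : MvPolynomial (Fin m) K, Q ≠ 0 ∧ MvPolynomial.aeval f Q ∈ 𝔮 := by
  push_neg at hnotdom
  obtain ⟨G, hGvanish, hG0⟩ := hnotdom
  -- `aeval f G` vanishes on the zero locus of `𝔮.radical`, hence lies in its radical,
  -- i.e. in `𝔮.radical`.
  have hmem : MvPolynomial.aeval f G ∈ 𝔮.radical := by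
    have h1 : MvPolynomial.aeval f G ∈
        MvPolynomial.vanishingIdeal K (MvPolynomial.zeroLocus K 𝔮.radical) := by
      intro x hx
      rw [MvPolynomial.mem_zeroLocus_iff] at hx
      change ∀ p ∈ 𝔮.radical, MvPolynomial.eval x p = 0 at hx
      change MvPolynomial.eval x (MvPolynomial.aeval f G) = 0
      have h := hGvanish x hx
      rw [MvPolynomial.aeval_def, MvPolynomial.eval_eval₂]
      have hc : ((MvPolynomial.eval x).comp
          (algebraMap K (MvPolynomial (Fin n) K))) = RingHom.id K := by
        ext a
        simp [MvPolynomial.algebraMap_eq]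
      rw [hc, MvPolynomial.eval₂_id]
      exact h
    rw [MvPolynomial.vanishingIdeal_zeroLocus_eq_radical, Ideal.radical_idem] at h1
    exact h1
  obtain ⟨k, hk⟩ := hmem
  refine ⟨G ^ k, pow_ne_zero k hG0, ?_⟩
  rw [map_pow]
  exact hk
end

section
/- Let 𝔞 be an equidimensional ideal of dimension m in K[X₁,…,Xₙ] (K algebraically closed) with f₁,…,f_m a secant sequence for 𝔞, A = K[X]/𝔞, S the multiplicative set of nonzero elements of the polynomial subring K[f] = K[f₁+𝔞,…,f_m+𝔞] of A, and K(f) its fraction field. Then the localization S⁻¹A is a finite-dimensional K(f)-vector space. -/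
open MvPolynomial

set_option synthInstance.maxHeartbeats 1000000
set_option maxHeartbeats 1000000

noncomputable section

variable {K : Type*} [Field K] {n m : ℕ}

/-- The `K`-algebra map `K[Y₁,…,Y_m] → A = K[X]/𝔞`, `Yᵢ ↦ fᵢ + 𝔞`; its image is the
subring `K[f]` of `A`. -/
def secPhi (𝔞 : Ideal (MvPolynomial (Fin n) K)) (f : Fin m → MvPolynomial (Fin n) K) :
    MvPolynomial (Fin m) K →ₐ[K] MvPolynomial (Fin n) K ⧸ 𝔞 :=
  MvPolynomial.aeval (fun i => Ideal.Quotient.mk 𝔞 (f i))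

/-- The multiplicative set `S(f) = K[f] \ {0}` of `A`, i.e. the images of the nonzero
polynomials in `K[Y₁,…,Y_m]`. -/
def secS (𝔞 : Ideal (MvPolynomial (Fin n) K)) (f : Fin m → MvPolynomial (Fin n) K) :
    Submonoid (MvPolynomial (Fin n) K ⧸ 𝔞) where
  carrier := {a | ∃ q : MvPolynomial (Fin m) K, q ≠ 0 ∧ secPhi 𝔞 f q = a}
  one_mem' := ⟨1, one_ne_zero, map_one _⟩
  mul_mem' := by
    rintro a b ⟨q, hq, rfl⟩ ⟨r, hr, rfl⟩
    exact ⟨q * r, mul_ne_zero hq hr, map_mul _ _ _⟩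

/-- The structure of `K(f) = K(Y₁,…,Y_m)`-algebra on `S(f)⁻¹A`, via `q/s ↦ φ(q)/φ(s)`. -/
instance secFracAlgebra {𝔞 : Ideal (MvPolynomial (Fin n) K)}
    {f : Fin m → MvPolynomial (Fin n) K} :
    Algebra (FractionRing (MvPolynomial (Fin m) K)) (Localization (secS 𝔞 f)) :=
  (IsLocalization.lift (M := nonZeroDivisors (MvPolynomial (Fin m) K))
    (S := FractionRing (MvPolynomial (Fin m) K)) (P := Localization (secS 𝔞 f))
    (g := (algebraMap _ (Localization (secS 𝔞 f))).comp (secPhi 𝔞 f).toRingHom)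
    (fun q => IsLocalization.map_units (M := secS 𝔞 f) (Localization (secS 𝔞 f))
      ⟨secPhi 𝔞 f q, q, mem_nonZeroDivisors_iff_ne_zero.mp q.2, rfl⟩)).toAlgebra

section Aux

universe u v

variable {K : Type v} [Field K] {d : ℕ} {D : Type u} [CommRing D] [Algebra K D]

/-- Bridge between multivariate evaluation with a distinguished first variable and
polynomial evaluation via `finSuccEquiv`. -/
lemma aux_bridge (φ : MvPolynomial (Fin d) K →ₐ[K] D) (a : D)
    (p : MvPolynomial (Fin (d + 1)) K) :
    aeval (Fin.cons a fun i => φ (X i)) p =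
      Polynomial.eval₂ φ.toRingHom a (finSuccEquiv K d p) := by
  have h : (aeval (Fin.cons a fun i => φ (X i)) : MvPolynomial (Fin (d + 1)) K →ₐ[K] D)
      = (Polynomial.eval₂AlgHom φ a fun r => Commute.all _ _).comp
        ((finSuccEquiv K d : MvPolynomial (Fin (d + 1)) K ≃ₐ[K]
          Polynomial (MvPolynomial (Fin d) K)) :
            MvPolynomial (Fin (d + 1)) K →ₐ[K] Polynomial (MvPolynomial (Fin d) K)) := by
    apply MvPolynomial.algHom_ext
    intro i
    refine Fin.cases ?_ (fun j => ?_) i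
    · simp [finSuccEquiv_X_zero]
    · simp [finSuccEquiv_X_succ]
  exact AlgHom.congr_fun h p

variable (φ : MvPolynomial (Fin d) K →ₐ[K] D) (S : Submonoid D)

/-- `mk' 1 t` lies in the image of the fraction field. -/
lemma aux_mk'_one
    (hS : ∀ a : D, a ∈ S ↔ ∃ q : MvPolynomial (Fin d) K, q ≠ 0 ∧ φ q = a)
    [Algebra (FractionRing (MvPolynomial (Fin d) K)) (Localization S)]
    (hcomp : ∀ q : MvPolynomial (Fin d) K,
      algebraMap (FractionRing (MvPolynomial (Fin d) K)) (Localization S)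
        (algebraMap (MvPolynomial (Fin d) K) (FractionRing (MvPolynomial (Fin d) K)) q)
        = algebraMap D (Localization S) (φ q)) (t : S) :
    ∃ c : FractionRing (MvPolynomial (Fin d) K),
      IsLocalization.mk' (Localization S) (1 : D) t
        = algebraMap (FractionRing (MvPolynomial (Fin d) K)) (Localization S) c := by
  obtain ⟨q, hq0, hqt⟩ := (hS t).mp t.2
  have hqF : algebraMap (MvPolynomial (Fin d) K) (FractionRing (MvPolynomial (Fin d) K)) q ≠ 0 :=
    fun h => hq0 (IsFractionRing.injective (MvPolynomial (Fin d) K) _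
      (h.trans (map_zero _).symm))
  refine ⟨(algebraMap (MvPolynomial (Fin d) K) (FractionRing (MvPolynomial (Fin d) K)) q)⁻¹, ?_⟩
  have hu : IsUnit (algebraMap D (Localization S) (t : D)) := IsLocalization.map_units _ t
  apply hu.mul_left_cancel
  rw [IsLocalization.mk'_spec', map_one]
  conv_rhs => rw [← hqt, ← hcomp q]
  rw [← map_mul, mul_inv_cancel₀ hqF, map_one]

/-- Finite generation of the localization over the fraction field. -/
lemma aux_finiteType
    (hS : ∀ a : D, a ∈ S ↔ ∃ q : MvPolynomial (Fin d) K, q ≠ 0 ∧ φ q = a)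
    [Algebra (FractionRing (MvPolynomial (Fin d) K)) (Localization S)]
    (hcomp : ∀ q : MvPolynomial (Fin d) K,
      algebraMap (FractionRing (MvPolynomial (Fin d) K)) (Localization S)
        (algebraMap (MvPolynomial (Fin d) K) (FractionRing (MvPolynomial (Fin d) K)) q)
        = algebraMap D (Localization S) (φ q))
    [Algebra.FiniteType K D] :
    Algebra.FiniteType (FractionRing (MvPolynomial (Fin d) K)) (Localization S) := by
  classical
  obtain ⟨s, hs⟩ := (inferInstance : Algebra.FiniteType K D).out
  refine ⟨⟨s.image (algebraMap D (Localization S)), ?_⟩⟩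
  rw [eq_top_iff]
  rintro z -
  obtain ⟨⟨x, t⟩, rfl⟩ := IsLocalization.mk'_surjective S z
  dsimp only
  rw [IsLocalization.mk'_eq_mul_mk'_one]
  refine Subalgebra.mul_mem _ ?_ ?_
  · have hx : x ∈ Algebra.adjoin K (s : Set D) := hs.symm ▸ Algebra.mem_top
    refine Algebra.adjoin_induction ?_ ?_ ?_ ?_ hx
    · intro y hy
      exact Algebra.subset_adjoin (Finset.mem_coe.mpr (Finset.mem_image_of_mem _ hy))
    · intro r
      have h1 : algebraMap K D r = φ (MvPolynomial.C r) := by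
        rw [← MvPolynomial.algebraMap_eq, φ.commutes]
      rw [h1, ← hcomp]
      exact Subalgebra.algebraMap_mem _ _
    · intro y z _ _ hy hz
      rw [map_add]; exact add_mem hy hz
    · intro y z _ _ hy hz
      rw [map_mul]; exact mul_mem hy hz
  · obtain ⟨c, hc⟩ := aux_mk'_one φ S hS hcomp t
    rw [hc]
    exact Subalgebra.algebraMap_mem _ _

/-- An algebraic relation in `D` gives integrality in the localization. -/
lemma aux_integral_of_rel
    [Algebra (FractionRing (MvPolynomial (Fin d) K)) (Localization S)]
    (hcomp : ∀ q : MvPolynomial (Fin d) K,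
      algebraMap (FractionRing (MvPolynomial (Fin d) K)) (Localization S)
        (algebraMap (MvPolynomial (Fin d) K) (FractionRing (MvPolynomial (Fin d) K)) q)
        = algebraMap D (Localization S) (φ q))
    {a : D} {p : MvPolynomial (Fin (d + 1)) K} (hp : p ≠ 0)
    (hrel : aeval (Fin.cons a fun i => φ (X i)) p = 0) :
    IsIntegral (FractionRing (MvPolynomial (Fin d) K)) (algebraMap D (Localization S) a) := by
  have heval : Polynomial.eval₂ φ.toRingHom a (finSuccEquiv K d p) = 0 :=
    (aux_bridge φ a p).symm.trans hrel
  have h2 : Polynomial.eval₂ ((algebraMap D (Localization S)).comp φ.toRingHom)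
      (algebraMap D (Localization S) a) (finSuccEquiv K d p) = 0 := by
    rw [← Polynomial.hom_eval₂, heval, map_zero]
  rw [show (algebraMap D (Localization S)).comp φ.toRingHom
      = (algebraMap (FractionRing (MvPolynomial (Fin d) K)) (Localization S)).comp
        (algebraMap (MvPolynomial (Fin d) K) (FractionRing (MvPolynomial (Fin d) K)))
      from RingHom.ext fun q => (hcomp q).symm, ← Polynomial.eval₂_map] at h2
  have hfs : finSuccEquiv K d p ≠ 0 := fun h0 => hp (by
    have := congrArg (finSuccEquiv K d).symm h0
    simpa using this)
  have hP : (finSuccEquiv K d p).map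
      (algebraMap (MvPolynomial (Fin d) K) (FractionRing (MvPolynomial (Fin d) K))) ≠ 0 :=
    (Polynomial.map_ne_zero_iff (IsFractionRing.injective _ _)).mpr hfs
  exact IsAlgebraic.isIntegral ⟨_, hP, by rwa [Polynomial.aeval_def]⟩

/-- Conversely, algebraicity in the localization gives a relation in `D`. -/
lemma aux_rel_of_algebraic
    (hS : ∀ a : D, a ∈ S ↔ ∃ q : MvPolynomial (Fin d) K, q ≠ 0 ∧ φ q = a)
    [Algebra (FractionRing (MvPolynomial (Fin d) K)) (Localization S)]
    (hcomp : ∀ q : MvPolynomial (Fin d) K,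
      algebraMap (FractionRing (MvPolynomial (Fin d) K)) (Localization S)
        (algebraMap (MvPolynomial (Fin d) K) (FractionRing (MvPolynomial (Fin d) K)) q)
        = algebraMap D (Localization S) (φ q))
    (a : D)
    (h : IsAlgebraic (FractionRing (MvPolynomial (Fin d) K)) (algebraMap D (Localization S) a)) :
    ∃ p : MvPolynomial (Fin (d + 1)) K, p ≠ 0 ∧
      aeval (Fin.cons a fun i => φ (X i)) p = 0 := by
  obtain ⟨Q, hQ0, hQ⟩ := h
  have h2 := IsLocalization.integerNormalization_eval₂_eq_zero
    (nonZeroDivisors (MvPolynomial (Fin d) K))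
    (algebraMap (FractionRing (MvPolynomial (Fin d) K)) (Localization S)) Q
    (x := algebraMap D (Localization S) a) (by rwa [Polynomial.aeval_def] at hQ)
  set P := IsLocalization.integerNormalization
    (nonZeroDivisors (MvPolynomial (Fin d) K)) Q with hP
  have hP0 : P ≠ 0 := fun h0 => hQ0 (IsFractionRing.integerNormalization_eq_zero_iff.mp h0)
  rw [show (algebraMap (FractionRing (MvPolynomial (Fin d) K)) (Localization S)).comp
        (algebraMap (MvPolynomial (Fin d) K) (FractionRing (MvPolynomial (Fin d) K)))
      = (algebraMap D (Localization S)).comp φ.toRingHom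
      from RingHom.ext fun q => hcomp q] at h2
  have h3 : algebraMap D (Localization S) (Polynomial.eval₂ φ.toRingHom a P) = 0 := by
    rw [Polynomial.hom_eval₂]; exact h2
  obtain ⟨ts, hts⟩ := (IsLocalization.map_eq_zero_iff S (Localization S) _).mp h3
  obtain ⟨q, hq0, hqt⟩ := (hS ts).mp ts.2
  refine ⟨rename Fin.succ q * (finSuccEquiv K d).symm P, mul_ne_zero ?_ ?_, ?_⟩
  · exact fun h0 => hq0 ((rename_injective _ (Fin.succ_injective d)) (by simpa using h0))
  · exact fun h0 => hP0 (by
      have := congrArg (finSuccEquiv K d) h0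
      simpa using this)
  · rw [map_mul]
    have e1 : aeval (Fin.cons a fun i => φ (X i)) (rename Fin.succ q) = φ q := by
      rw [aeval_rename]
      have hcs : ((Fin.cons a fun i => φ (X i)) ∘ Fin.succ) = fun i => φ (X i) := by
        funext j; simp
      rw [hcs, ← comp_aeval_apply, aeval_X_left_apply]
    have e2 : aeval (Fin.cons a fun i => φ (X i)) ((finSuccEquiv K d).symm P)
        = Polynomial.eval₂ φ.toRingHom a P := by
      rw [aux_bridge]; simp
    rw [e1, e2, hqt]
    exact hts

/-- A finitely generated domain over a field containing `d` algebraically independent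
elements admits a chain of primes of length `d`. -/
theorem aux_chain (K : Type v) [Field K] : ∀ (d : ℕ) (D : Type u) [CommRing D] [IsDomain D]
    [Algebra K D] [Algebra.FiniteType K D] (y : Fin d → D),
    AlgebraicIndependent K y → ∃ c : LTSeries (PrimeSpectrum D), c.length = d := by
  intro d
  induction d with
  | zero =>
    intro D _ _ _ _ y _
    exact ⟨RelSeries.singleton _ ⟨⊥, Ideal.bot_prime⟩, rfl⟩
  | succ d IH =>
    intro D _ _ _ _ y hy
    set φ : MvPolynomial (Fin d) K →ₐ[K] D := aeval (y ∘ Fin.succ) with hφ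
    have hφind : AlgebraicIndependent K (y ∘ Fin.succ) := hy.comp Fin.succ (Fin.succ_injective d)
    have hφinj : Function.Injective φ := hφind
    set T : Submonoid D :=
      { carrier := {a | ∃ q : MvPolynomial (Fin d) K, q ≠ 0 ∧ φ q = a}
        one_mem' := ⟨1, one_ne_zero, map_one _⟩
        mul_mem' := by
          rintro a b ⟨q, hq, rfl⟩ ⟨r, hr, rfl⟩
          exact ⟨q * r, mul_ne_zero hq hr, map_mul _ _ _⟩ } with hT
    have hSmem : ∀ a : D, a ∈ T ↔ ∃ q : MvPolynomial (Fin d) K, q ≠ 0 ∧ φ q = a :=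
      fun a => Iff.rfl
    have hTle : T ≤ nonZeroDivisors D := by
      rintro a ⟨q, hq, rfl⟩
      exact mem_nonZeroDivisors_of_ne_zero
        (fun h => hq (hφinj (h.trans (map_zero φ).symm)))
    letI : Algebra (FractionRing (MvPolynomial (Fin d) K)) (Localization T) :=
      (IsLocalization.lift (M := nonZeroDivisors (MvPolynomial (Fin d) K))
        (g := (algebraMap D (Localization T)).comp φ.toRingHom)
        (fun q => IsLocalization.map_units (M := T) (Localization T)
          ⟨φ q, q, mem_nonZeroDivisors_iff_ne_zero.mp q.2, rfl⟩)).toAlgebra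
    have hcomp : ∀ q : MvPolynomial (Fin d) K,
        algebraMap (FractionRing (MvPolynomial (Fin d) K)) (Localization T)
          (algebraMap (MvPolynomial (Fin d) K) (FractionRing (MvPolynomial (Fin d) K)) q)
          = algebraMap D (Localization T) (φ q) := fun q => IsLocalization.lift_eq _ q
    haveI hEdom : IsDomain (Localization T) :=
      IsLocalization.isDomain_of_le_nonZeroDivisors (Localization T) hTle
    have hnf : ¬ IsField (Localization T) := by
      intro hf
      letI := hf.toField
      haveI : Algebra.FiniteType (FractionRing (MvPolynomial (Fin d) K)) (Localization T) :=
        aux_finiteType φ T hSmem hcomp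
      haveI : Module.Finite (FractionRing (MvPolynomial (Fin d) K)) (Localization T) :=
        finite_of_finite_type_of_isJacobsonRing _ _
      haveI : Algebra.IsIntegral (FractionRing (MvPolynomial (Fin d) K)) (Localization T) :=
        Algebra.IsIntegral.of_finite _ _
      have hint : IsIntegral (FractionRing (MvPolynomial (Fin d) K))
          (algebraMap D (Localization T) (y 0)) := Algebra.IsIntegral.isIntegral _
      obtain ⟨p, hp0, hrel⟩ := aux_rel_of_algebraic φ T hSmem hcomp (y 0) hint.isAlgebraic
      have hcons : (Fin.cons (y 0) fun i => φ (X i)) = y := by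
        funext i
        refine Fin.cases rfl (fun j => ?_) i
        simp [hφ]
      rw [hcons] at hrel
      exact hp0 (hy (by rw [hrel, map_zero]))
    obtain ⟨J, hJ0, hJp⟩ := Ring.not_isField_iff_exists_prime.mp hnf
    have hdisj := (IsLocalization.isPrime_iff_isPrime_disjoint T (Localization T) J).mp hJp
    set 𝔮 : Ideal D := J.comap (algebraMap D (Localization T)) with h𝔮
    haveI h𝔮p : 𝔮.IsPrime := hdisj.1
    have h𝔮0 : 𝔮 ≠ ⊥ := by
      intro h
      apply hJ0
      rw [← IsLocalization.map_comap T (Localization T) J]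
      change Ideal.map _ 𝔮 = ⊥
      rw [h, Ideal.map_bot]
    haveI : Algebra.FiniteType K (D ⧸ 𝔮) :=
      Algebra.FiniteType.of_surjective (Ideal.Quotient.mkₐ K 𝔮)
        (Ideal.Quotient.mkₐ_surjective K 𝔮)
    have hind2 : AlgebraicIndependent K ((Ideal.Quotient.mkₐ K 𝔮) ∘ (y ∘ Fin.succ)) := by
      rw [AlgebraicIndependent]
      apply (injective_iff_map_eq_zero
        (aeval ((Ideal.Quotient.mkₐ K 𝔮) ∘ (y ∘ Fin.succ)) :
          MvPolynomial (Fin d) K →ₐ[K] D ⧸ 𝔮)).mpr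
      intro p hp
      by_contra hp0
      have h1 : aeval (⇑(Ideal.Quotient.mkₐ K 𝔮) ∘ (y ∘ Fin.succ)) p
          = Ideal.Quotient.mkₐ K 𝔮 (φ p) := (comp_aeval_apply _ _ _).symm
      rw [h1, Ideal.Quotient.mkₐ_eq_mk, Ideal.Quotient.eq_zero_iff_mem] at hp
      exact Set.disjoint_left.mp hdisj.2 (⟨p, hp0, rfl⟩ : φ p ∈ T) hp
    obtain ⟨c, hc⟩ := IH (D ⧸ 𝔮) _ hind2
    let gmap : PrimeSpectrum (D ⧸ 𝔮) → PrimeSpectrum D :=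
      fun p => ⟨p.asIdeal.comap (Ideal.Quotient.mk 𝔮), inferInstance⟩
    have hmono : StrictMono gmap := by
      apply Monotone.strictMono_of_injective
      · exact fun a b hab => Ideal.comap_mono hab
      · intro a b hab
        apply PrimeSpectrum.ext
        have := congrArg PrimeSpectrum.asIdeal hab
        exact Ideal.comap_injective_of_surjective _ Ideal.Quotient.mk_surjective this
    have hlt : (⟨⊥, Ideal.bot_prime⟩ : PrimeSpectrum D) < (c.map gmap hmono).head := by
      rw [LTSeries.head_map]
      show (⊥ : Ideal D) < (gmap c.head).asIdeal
      refine lt_of_lt_of_le (Ne.bot_lt h𝔮0) ?_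
      intro x hx
      show Ideal.Quotient.mk 𝔮 x ∈ (c.head).asIdeal
      rw [Ideal.Quotient.eq_zero_iff_mem.mpr hx]
      exact zero_mem _
    refine ⟨(c.map gmap hmono).cons ⟨⊥, Ideal.bot_prime⟩ hlt, ?_⟩
    simp [hc]

end Aux

/-- Every element of `A` satisfies a nontrivial algebraic relation over `K[f]`. -/
lemma aux_exists_rel (𝔞 : Ideal (MvPolynomial (Fin n) K))
    (hequi : ∀ 𝔭 ∈ 𝔞.minimalPrimes,
      ringKrullDim (MvPolynomial (Fin n) K ⧸ 𝔭) = (m : WithBot ℕ∞))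
    (f : Fin m → MvPolynomial (Fin n) K) (ar : MvPolynomial (Fin n) K) :
    ∃ p : MvPolynomial (Fin (m + 1)) K, p ≠ 0 ∧
      aeval (Fin.cons (Ideal.Quotient.mk 𝔞 ar) fun i => secPhi 𝔞 f (X i)) p = 0 := by
  classical
  set w : Fin (m + 1) → MvPolynomial (Fin n) K := Fin.cons ar f with hw
  have hex : ∀ 𝔭 ∈ 𝔞.minimalPrimes,
      ∃ p : MvPolynomial (Fin (m + 1)) K, p ≠ 0 ∧ aeval w p ∈ 𝔭 := by
    intro 𝔭 h𝔭
    haveI hpr : 𝔭.IsPrime := h𝔭.1.1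
    by_contra hcon
    push_neg at hcon
    have hind : AlgebraicIndependent K ((Ideal.Quotient.mkₐ K 𝔭) ∘ w) := by
      rw [AlgebraicIndependent]
      apply (injective_iff_map_eq_zero
        (aeval ((Ideal.Quotient.mkₐ K 𝔭) ∘ w) :
          MvPolynomial (Fin (m + 1)) K →ₐ[K] MvPolynomial (Fin n) K ⧸ 𝔭)).mpr
      intro p hp
      by_contra hp0
      have h1 : aeval (⇑(Ideal.Quotient.mkₐ K 𝔭) ∘ w) p
          = Ideal.Quotient.mkₐ K 𝔭 (aeval w p) := (comp_aeval_apply _ _ _).symm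
      rw [h1, Ideal.Quotient.mkₐ_eq_mk, Ideal.Quotient.eq_zero_iff_mem] at hp
      exact hcon p hp0 hp
    haveI : Algebra.FiniteType K (MvPolynomial (Fin n) K ⧸ 𝔭) :=
      Algebra.FiniteType.of_surjective
        (Ideal.Quotient.mkₐ K 𝔭) (Ideal.Quotient.mkₐ_surjective K 𝔭)
    obtain ⟨c, hc⟩ := aux_chain K (m + 1) (MvPolynomial (Fin n) K ⧸ 𝔭) _ hind
    have h1 : ((m + 1 : ℕ) : WithBot ℕ∞) ≤ ringKrullDim (MvPolynomial (Fin n) K ⧸ 𝔭) := by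
      rw [← hc]
      exact Order.LTSeries.length_le_krullDim c
    rw [hequi 𝔭 h𝔭] at h1
    have h2 : (m + 1 : ℕ) ≤ m := by exact_mod_cast h1
    omega
  have hfin : 𝔞.minimalPrimes.Finite := by
    rw [Ideal.minimalPrimes_eq_comap]
    exact (minimalPrimes.finite_of_isNoetherianRing _).image _
  choose g hg0 hgmem using hex
  set p0 : MvPolynomial (Fin (m + 1)) K :=
    ∏ 𝔭 ∈ hfin.toFinset.attach, g 𝔭.1 (hfin.mem_toFinset.mp 𝔭.2) with hp0def
  have hp00 : p0 ≠ 0 :=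
    Finset.prod_ne_zero_iff.mpr fun 𝔭 _ => hg0 _ _
  have hmem : aeval w p0 ∈ 𝔞.radical := by
    rw [← Ideal.sInf_minimalPrimes]
    rw [Submodule.mem_sInf]
    intro 𝔭 h𝔭
    have hdvd := Finset.dvd_prod_of_mem
      (fun (q : {x // x ∈ hfin.toFinset}) => g q.1 (hfin.mem_toFinset.mp q.2))
      (Finset.mem_attach _ (⟨𝔭, hfin.mem_toFinset.mpr h𝔭⟩ : {x // x ∈ hfin.toFinset}))
    rw [← hp0def] at hdvd
    obtain ⟨r, hr⟩ := hdvd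
    rw [hr, map_mul]
    exact Ideal.mul_mem_right _ _ (hgmem 𝔭 h𝔭)
  obtain ⟨N, hN⟩ := hmem
  refine ⟨p0 ^ N, pow_ne_zero _ hp00, ?_⟩
  have hco : (Fin.cons (Ideal.Quotient.mk 𝔞 ar) fun i => secPhi 𝔞 f (X i))
      = ⇑(Ideal.Quotient.mkₐ K 𝔞) ∘ w := by
    funext i
    refine Fin.cases ?_ (fun j => ?_) i
    · simp [hw]
    · simp [hw, secPhi]
  rw [hco]
  have h2 : aeval (⇑(Ideal.Quotient.mkₐ K 𝔞) ∘ w) (p0 ^ N)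
      = Ideal.Quotient.mkₐ K 𝔞 (aeval w (p0 ^ N)) := (comp_aeval_apply _ _ _).symm
  rw [h2, Ideal.Quotient.mkₐ_eq_mk, Ideal.Quotient.eq_zero_iff_mem, map_pow]
  exact hN

/-- Corollary `finite`: For an equidimensional ideal `𝔞` of dimension `m`
with secant sequence `f₁,…,f_m`, the localization `S(f)⁻¹A` is a finite dimensional
vector space over `K(f)`. -/
theorem localization_finite_dimensional [IsAlgClosed K]
    (𝔞 : Ideal (MvPolynomial (Fin n) K)) (h𝔞 : 𝔞 ≠ ⊤)
    (hequi : ∀ 𝔭 ∈ 𝔞.minimalPrimes,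
      ringKrullDim (MvPolynomial (Fin n) K ⧸ 𝔭) = (m : WithBot ℕ∞))
    (f : Fin m → MvPolynomial (Fin n) K)
    (hsec : ∀ j : ℕ, 1 ≤ j → j ≤ m →
      ringKrullDim (MvPolynomial (Fin n) K ⧸
          (𝔞 ⊔ Ideal.span (f '' {i : Fin m | (i : ℕ) < j}))) = ((m - j : ℕ) : WithBot ℕ∞)) :
    FiniteDimensional (FractionRing (MvPolynomial (Fin m) K)) (Localization (secS 𝔞 f)) := by
  classical
  have hS : ∀ a : MvPolynomial (Fin n) K ⧸ 𝔞, a ∈ secS 𝔞 f ↔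
      ∃ q : MvPolynomial (Fin m) K, q ≠ 0 ∧ secPhi 𝔞 f q = a := fun a => Iff.rfl
  have hcomp : ∀ q : MvPolynomial (Fin m) K,
      algebraMap (FractionRing (MvPolynomial (Fin m) K)) (Localization (secS 𝔞 f))
        (algebraMap (MvPolynomial (Fin m) K) (FractionRing (MvPolynomial (Fin m) K)) q)
        = algebraMap (MvPolynomial (Fin n) K ⧸ 𝔞) (Localization (secS 𝔞 f))
          (secPhi 𝔞 f q) := fun q => IsLocalization.lift_eq _ q
  haveI : Algebra.FiniteType K (MvPolynomial (Fin n) K ⧸ 𝔞) :=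
    Algebra.FiniteType.of_surjective
      (Ideal.Quotient.mkₐ K 𝔞) (Ideal.Quotient.mkₐ_surjective K 𝔞)
  haveI : Algebra.FiniteType (FractionRing (MvPolynomial (Fin m) K))
      (Localization (secS 𝔞 f)) := aux_finiteType (secPhi 𝔞 f) (secS 𝔞 f) hS hcomp
  have hint : ∀ a : MvPolynomial (Fin n) K ⧸ 𝔞,
      IsIntegral (FractionRing (MvPolynomial (Fin m) K))
        (algebraMap (MvPolynomial (Fin n) K ⧸ 𝔞) (Localization (secS 𝔞 f)) a) := by
    intro a
    obtain ⟨ar, rfl⟩ := Ideal.Quotient.mk_surjective a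
    obtain ⟨p, hp0, hprel⟩ := aux_exists_rel 𝔞 hequi f ar
    exact aux_integral_of_rel (secPhi 𝔞 f) (secS 𝔞 f) hcomp hp0 hprel
  haveI : Algebra.IsIntegral (FractionRing (MvPolynomial (Fin m) K))
      (Localization (secS 𝔞 f)) := by
    refine ⟨fun z => ?_⟩
    obtain ⟨⟨x, t⟩, rfl⟩ := IsLocalization.mk'_surjective (secS 𝔞 f) z
    dsimp only
    rw [IsLocalization.mk'_eq_mul_mk'_one]
    obtain ⟨c, hc⟩ := aux_mk'_one (secPhi 𝔞 f) (secS 𝔞 f) hS hcomp t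
    rw [hc]
    exact IsIntegral.mul (R := FractionRing (MvPolynomial (Fin m) K))
      (A := Localization (secS 𝔞 f)) (hint x) (isIntegral_algebraMap)
  exact Algebra.IsIntegral.finite (R := FractionRing (MvPolynomial (Fin m) K))
    (A := Localization (secS 𝔞 f))

end
end

section
/- Let 𝔞 ⊂ K[X₁,…,Xₙ] be an equidimensional ideal of dimension m, A = K[X]/𝔞, and f₁,…,f_m a regular sequence with respect to 𝔞 (hence secant). Let S = K[f]∖{0} and K(f) = Frac(K[f]). Then dim_K A/(f₁,…,f_m) ≤ dim_{K(f)} S⁻¹A. -/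
open MvPolynomial

set_option synthInstance.maxHeartbeats 1000000
set_option maxHeartbeats 1000000

noncomputable section

set_option maxHeartbeats 8000000

universe u w

theorem aux_key (K : Type*) [Field K] :
    ∀ (m : ℕ) (A : Type u) [CommRing A] [Algebra K A] (g : Fin m → A),
      (∀ j : Fin m, ∀ b : A, g j * b ∈ Ideal.span (g '' {i | i < j}) →
          b ∈ Ideal.span (g '' {i | i < j})) →
      ∀ (ι : Type w) [Fintype ι] (a : ι → A),
        (LinearIndependent K fun i => Ideal.Quotient.mk (Ideal.span (Set.range g)) (a i)) →
        ∀ r : ι → MvPolynomial (Fin m) K,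
          (∑ i, (MvPolynomial.aeval g) (r i) * a i = 0) → ∀ i, r i = 0 := by
  intro m
  induction m with
  | zero =>
    intro A _ _ g hg ι _ a hind r hrel i
    have hC : ∀ i, r i = MvPolynomial.C (MvPolynomial.constantCoeff (r i)) := fun i =>
      MvPolynomial.eq_C_of_isEmpty (r i)
    set J := Ideal.span (Set.range g) with hJ
    have h1 : ∑ j, MvPolynomial.constantCoeff (r j) •
        Ideal.Quotient.mk J (a j) = 0 := by
      have := congrArg (Ideal.Quotient.mk J) hrel
      rw [map_sum, map_zero] at this
      rw [← this]
      refine Finset.sum_congr rfl fun j _ => ?_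
      rw [map_mul, Algebra.smul_def]
      congr 1
      rw [show g = 0 from funext fun i => i.elim0, MvPolynomial.aeval_zero]
      exact ((Ideal.Quotient.mkₐ K J).commutes _).symm
    have h2 := Fintype.linearIndependent_iff.mp hind
        (fun j => MvPolynomial.constantCoeff (r j)) h1 i
    rw [hC i, h2, map_zero]
  | succ m ih =>
    intro A _ _ g hg ι _ a hind r hrel
    classical
    set I0 : Ideal A := Ideal.span {g 0} with hI0
    set J1 : Ideal A := Ideal.span (Set.range fun i : Fin m => g i.succ) with hJ1
    have hJsup : I0 ⊔ J1 = Ideal.span (Set.range g) := by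
      rw [hI0, hJ1, ← Ideal.span_insert, ← Fin.range_cons (g 0) (fun i : Fin m => g i.succ)]
      exact congrArg (Ideal.span ∘ Set.range) (Fin.cons_self_tail g)
    -- g 0 is a nonzerodivisor
    have h0 : ∀ b : A, g 0 * b = 0 → b = 0 := by
      intro b hb
      have hempty : {i : Fin (m + 1) | i < 0} = (∅ : Set (Fin (m + 1))) :=
        Set.eq_empty_of_forall_notMem fun i hi => (Fin.not_lt_zero i) hi
      have := hg 0 b (by rw [hb]; exact Ideal.zero_mem _)
      rwa [hempty, Set.image_empty, Ideal.span_empty, Ideal.mem_bot] at this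
    -- set identity
    have hsetid : ∀ j : Fin m, ({g 0} : Set A) ∪ (fun i : Fin m => g i.succ) '' {i | i < j}
        = g '' {i : Fin (m + 1) | i < j.succ} := by
      intro j
      ext x
      simp only [Set.mem_union, Set.mem_singleton_iff, Set.mem_image, Set.mem_setOf_eq]
      constructor
      · rintro (rfl | ⟨i, hi, rfl⟩)
        · exact ⟨0, Fin.succ_pos j, rfl⟩
        · exact ⟨i.succ, Fin.succ_lt_succ_iff.mpr hi, rfl⟩
      · rintro ⟨i, hi, rfl⟩
        rcases Fin.eq_zero_or_eq_succ i with rfl | ⟨i', rfl⟩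
        · exact Or.inl rfl
        · exact Or.inr ⟨i', Fin.succ_lt_succ_iff.mp hi, rfl⟩
    -- regularity of the image sequence
    have hg' : ∀ j : Fin m, ∀ b' : A ⧸ I0,
        (fun i : Fin m => Ideal.Quotient.mk I0 (g i.succ)) j * b' ∈
          Ideal.span ((fun i : Fin m => Ideal.Quotient.mk I0 (g i.succ)) '' {i | i < j}) →
        b' ∈ Ideal.span ((fun i : Fin m => Ideal.Quotient.mk I0 (g i.succ)) '' {i | i < j}) := by
      intro j b' hb'
      obtain ⟨b, rfl⟩ := Ideal.Quotient.mk_surjective b'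
      have himg : Ideal.span ((fun i : Fin m => Ideal.Quotient.mk I0 (g i.succ)) '' {i | i < j})
          = Ideal.map (Ideal.Quotient.mk I0)
              (Ideal.span ((fun i : Fin m => g i.succ) '' {i | i < j})) := by
        rw [Ideal.map_span, Set.image_image]
      rw [himg] at hb' ⊢
      have hsup : Ideal.span ((fun i : Fin m => g i.succ) '' {i | i < j}) ⊔ I0
          = Ideal.span (g '' {i : Fin (m + 1) | i < j.succ}) := by
        rw [sup_comm, hI0, ← Ideal.span_union, hsetid j]
      have hb2 : g j.succ * b ∈ Ideal.span (g '' {i : Fin (m + 1) | i < j.succ}) := by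
        rw [← hsup, ← Ideal.mem_quotient_iff_mem_sup, map_mul]
        exact hb'
      have hb3 := hg j.succ b hb2
      rw [← hsup] at hb3
      rwa [Ideal.mem_quotient_iff_mem_sup]
    -- independence of the images
    have hEq : Ideal.span (Set.range fun i : Fin m => Ideal.Quotient.mk I0 (g i.succ))
        = Ideal.map (Ideal.Quotient.mkₐ K I0) J1 := by
      rw [hJ1, Ideal.map_span, ← Set.range_comp]
      congr 1
    have hind' : LinearIndependent K fun i =>
        Ideal.Quotient.mk
          (Ideal.span (Set.range fun i : Fin m => Ideal.Quotient.mk I0 (g i.succ)))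
          (Ideal.Quotient.mk I0 (a i)) := by
      rw [← hJsup] at hind
      rw [hEq]
      refine LinearIndependent.of_comp
        (DoubleQuot.quotQuotEquivQuotSupₐ K I0 J1).toLinearMap ?_
      have hfun : (⇑(DoubleQuot.quotQuotEquivQuotSupₐ K I0 J1).toLinearMap ∘ fun i =>
            Ideal.Quotient.mk (Ideal.map (Ideal.Quotient.mkₐ K I0) J1)
              (Ideal.Quotient.mk I0 (a i)))
          = fun i => Ideal.Quotient.mk (I0 ⊔ J1) (a i) := by
        funext i
        simp only [Function.comp_apply, AlgEquiv.toLinearMap_apply,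
          DoubleQuot.coe_quotQuotEquivQuotSupₐ]
        exact DoubleQuot.quotQuotEquivQuotSup_quotQuotMk I0 J1 (a i)
      rw [hfun]
      exact hind
    have hmk0 : Ideal.Quotient.mk I0 (g 0) = 0 := by
      rw [Ideal.Quotient.eq_zero_iff_mem, hI0]
      exact Ideal.subset_span rfl
    have hcomm : ∀ c : MvPolynomial (Fin m) K,
        Ideal.Quotient.mk I0 (MvPolynomial.aeval (fun j : Fin m => g j.succ) c)
          = MvPolynomial.aeval (fun j : Fin m => Ideal.Quotient.mk I0 (g j.succ)) c := by
      intro c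
      have h2 := MvPolynomial.comp_aeval (fun j : Fin m => g j.succ) (Ideal.Quotient.mkₐ K I0)
      have h3 := DFunLike.congr_fun h2 c
      simpa [Ideal.Quotient.mkₐ_eq_mk] using h3
    have hmod : ∀ q : ι → Polynomial (MvPolynomial (Fin m) K),
        (∑ i, Polynomial.eval₂ ((MvPolynomial.aeval fun j : Fin m => g j.succ : MvPolynomial (Fin m) K →ₐ[K] A) : MvPolynomial (Fin m) K →+* A) (g 0) (q i) * a i = 0) →
        ∀ i, (q i).coeff 0 = 0 := by
      intro q hq
      have h1 : ∑ i, MvPolynomial.aeval (fun j : Fin m => Ideal.Quotient.mk I0 (g j.succ))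
          ((q i).coeff 0) * Ideal.Quotient.mk I0 (a i) = 0 := by
        have hmapped := congrArg (Ideal.Quotient.mk I0) hq
        rw [map_sum, map_zero] at hmapped
        rw [← hmapped]
        refine Finset.sum_congr rfl fun i _ => ?_
        rw [map_mul]
        congr 1
        rw [Polynomial.hom_eval₂, hmk0, Polynomial.eval₂_at_zero, RingHom.comp_apply]
        exact (hcomm _).symm
      exact fun i => ih (A ⧸ I0) (fun j => Ideal.Quotient.mk I0 (g j.succ)) hg' ι
        (fun i => Ideal.Quotient.mk I0 (a i)) hind' (fun i => (q i).coeff 0) h1 i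
    have inner : ∀ d : ℕ, ∀ q : ι → Polynomial (MvPolynomial (Fin m) K),
        (∀ i, (q i).natDegree ≤ d) →
        (∑ i, Polynomial.eval₂ ((MvPolynomial.aeval fun j : Fin m => g j.succ : MvPolynomial (Fin m) K →ₐ[K] A) : MvPolynomial (Fin m) K →+* A) (g 0) (q i) * a i = 0) →
        ∀ i, q i = 0 := by
      intro d
      induction d with
      | zero =>
        intro q hdeg hq i
        rw [Polynomial.eq_C_of_natDegree_le_zero (hdeg i), hmod q hq i, map_zero]
      | succ d ihd =>
        intro q hdeg hq
        have hc := hmod q hq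
        have hdiv : ∀ i, q i = Polynomial.X * (q i).divX := by
          intro i
          conv_lhs => rw [← Polynomial.X_mul_divX_add (q i)]
          rw [hc i, map_zero, add_zero]
        have hq' : ∑ i, Polynomial.eval₂ ((MvPolynomial.aeval fun j : Fin m => g j.succ : MvPolynomial (Fin m) K →ₐ[K] A) : MvPolynomial (Fin m) K →+* A) (g 0) ((q i).divX) * a i = 0 := by
          apply h0
          rw [Finset.mul_sum]
          have hcongr : ∀ i ∈ Finset.univ (α := ι),
              g 0 * (Polynomial.eval₂ ((MvPolynomial.aeval fun j : Fin m => g j.succ : MvPolynomial (Fin m) K →ₐ[K] A) : MvPolynomial (Fin m) K →+* A) (g 0) ((q i).divX) * a i)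
              = Polynomial.eval₂ ((MvPolynomial.aeval fun j : Fin m => g j.succ : MvPolynomial (Fin m) K →ₐ[K] A) : MvPolynomial (Fin m) K →+* A) (g 0) (q i) * a i := by
            intro i _
            rw [← mul_assoc]
            congr 1
            conv_rhs => rw [hdiv i]
            rw [Polynomial.eval₂_mul, Polynomial.eval₂_X]
          rw [Finset.sum_congr rfl hcongr]
          exact hq
        have hz := ihd (fun i => (q i).divX) (fun i => by
            show ((q i).divX).natDegree ≤ d
            have h := Polynomial.natDegree_divX_eq_natDegree_tsub_one (p := q i)
            have h2 := hdeg i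
            omega) hq'
        intro i
        rw [hdiv i, show (q i).divX = 0 from hz i, mul_zero]
    have hbridge : ∀ p : MvPolynomial (Fin (m + 1)) K,
        MvPolynomial.aeval g p
          = Polynomial.eval₂ ((MvPolynomial.aeval fun j : Fin m => g j.succ : MvPolynomial (Fin m) K →ₐ[K] A) : MvPolynomial (Fin m) K →+* A) (g 0) (MvPolynomial.finSuccEquiv K m p) := by
      intro p
      induction p using MvPolynomial.induction_on with
      | C k =>
        simp [MvPolynomial.finSuccEquiv_apply, Polynomial.eval₂_C]
      | add p q hp hq =>
        simp [map_add, Polynomial.eval₂_add, hp, hq]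
      | mul_X p i hp =>
        rcases Fin.eq_zero_or_eq_succ i with rfl | ⟨j, rfl⟩
        · simp [map_mul, Polynomial.eval₂_mul, hp, MvPolynomial.finSuccEquiv_X_zero,
            Polynomial.eval₂_X]
        · simp [map_mul, Polynomial.eval₂_mul, hp, MvPolynomial.finSuccEquiv_X_succ,
            Polynomial.eval₂_C]
    have hrel' : ∑ i, Polynomial.eval₂ ((MvPolynomial.aeval fun j : Fin m => g j.succ : MvPolynomial (Fin m) K →ₐ[K] A) : MvPolynomial (Fin m) K →+* A) (g 0) (MvPolynomial.finSuccEquiv K m (r i)) * a i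
        = 0 := by
      have hcongr : ∀ i ∈ Finset.univ (α := ι),
          Polynomial.eval₂ ((MvPolynomial.aeval fun j : Fin m => g j.succ : MvPolynomial (Fin m) K →ₐ[K] A) : MvPolynomial (Fin m) K →+* A) (g 0) (MvPolynomial.finSuccEquiv K m (r i)) * a i
          = MvPolynomial.aeval g (r i) * a i := fun i _ => by rw [hbridge (r i)]
      rw [Finset.sum_congr rfl hcongr]
      exact hrel
    intro i
    have hz := inner (Finset.univ.sup fun i => (MvPolynomial.finSuccEquiv K m (r i)).natDegree)
      (fun i => MvPolynomial.finSuccEquiv K m (r i))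
      (fun i => Finset.le_sup (f := fun i => ((MvPolynomial.finSuccEquiv K m) (r i)).natDegree)
        (Finset.mem_univ i)) hrel' i
    exact (MvPolynomial.finSuccEquiv K m).injective (by rw [hz, map_zero])


variable {K : Type*} [Field K] {n m : ℕ}

theorem secFrac_algebraMap {𝔞 : Ideal (MvPolynomial (Fin n) K)}
    {f : Fin m → MvPolynomial (Fin n) K} (c : MvPolynomial (Fin m) K) :
    algebraMap (FractionRing (MvPolynomial (Fin m) K)) (Localization (secS 𝔞 f))
        (algebraMap (MvPolynomial (Fin m) K) (FractionRing (MvPolynomial (Fin m) K)) c)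
      = algebraMap (MvPolynomial (Fin n) K ⧸ 𝔞) (Localization (secS 𝔞 f)) (secPhi 𝔞 f c) := by
  have h : algebraMap (FractionRing (MvPolynomial (Fin m) K)) (Localization (secS 𝔞 f))
      = IsLocalization.lift (M := nonZeroDivisors (MvPolynomial (Fin m) K))
        (S := FractionRing (MvPolynomial (Fin m) K)) (P := Localization (secS 𝔞 f))
        (g := (algebraMap _ (Localization (secS 𝔞 f))).comp (secPhi 𝔞 f).toRingHom)
        (fun q => IsLocalization.map_units (M := secS 𝔞 f) (Localization (secS 𝔞 f))
          ⟨secPhi 𝔞 f q, q, mem_nonZeroDivisors_iff_ne_zero.mp q.2, rfl⟩) := rfl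
  rw [h, IsLocalization.lift_eq]
  rfl

/-- Lemma `inequality`: If `f₁,…,f_m` is a regular sequence with respect to
an equidimensional ideal `𝔞` of dimension `m`, then
`dim_K A/(f₁,…,f_m) ≤ dim_{K(f)} S(f)⁻¹A`. -/
theorem rank_quotient_le_rank_localization_of_regular [IsAlgClosed K]
    (𝔞 : Ideal (MvPolynomial (Fin n) K)) (h𝔞 : 𝔞 ≠ ⊤)
    (hequi : ∀ 𝔭 ∈ 𝔞.minimalPrimes,
      ringKrullDim (MvPolynomial (Fin n) K ⧸ 𝔭) = (m : WithBot ℕ∞))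
    (f : Fin m → MvPolynomial (Fin n) K)
    (hproper : 𝔞 ⊔ Ideal.span (Set.range f) ≠ ⊤)
    (hreg : ∀ j : Fin m, ∀ g : MvPolynomial (Fin n) K,
      f j * g ∈ 𝔞 ⊔ Ideal.span (f '' {i : Fin m | i < j}) →
        g ∈ 𝔞 ⊔ Ideal.span (f '' {i : Fin m | i < j})) :
    Module.rank K
        ((MvPolynomial (Fin n) K ⧸ 𝔞) ⧸
          Ideal.span (Set.range fun i => Ideal.Quotient.mk 𝔞 (f i)))
      ≤ Module.rank (FractionRing (MvPolynomial (Fin m) K)) (Localization (secS 𝔞 f)) := by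
  classical
  set g : Fin m → (MvPolynomial (Fin n) K ⧸ 𝔞) := fun i => Ideal.Quotient.mk 𝔞 (f i) with hgdef
  set J : Ideal (MvPolynomial (Fin n) K ⧸ 𝔞) := Ideal.span (Set.range fun i => Ideal.Quotient.mk 𝔞 (f i)) with hJdef
  -- regularity at the level of (MvPolynomial (Fin n) K ⧸ 𝔞)
  have hgreg : ∀ j : Fin m, ∀ b : (MvPolynomial (Fin n) K ⧸ 𝔞), g j * b ∈ Ideal.span (g '' {i | i < j}) →
      b ∈ Ideal.span (g '' {i | i < j}) := by
    intro j b hb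
    obtain ⟨c, rfl⟩ := Ideal.Quotient.mk_surjective b
    have himg : Ideal.span (g '' {i : Fin m | i < j})
        = Ideal.map (Ideal.Quotient.mk 𝔞) (Ideal.span (f '' {i | i < j})) := by
      rw [Ideal.map_span, Set.image_image]
    rw [himg] at hb ⊢
    have hb2 : f j * c ∈ Ideal.span (f '' {i : Fin m | i < j}) ⊔ 𝔞 := by
      rw [← Ideal.mem_quotient_iff_mem_sup, map_mul]
      exact hb
    rw [sup_comm] at hb2
    have hb3 := hreg j c hb2
    rw [sup_comm] at hb3
    rwa [Ideal.mem_quotient_iff_mem_sup]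
  -- now the rank inequality
  rw [Module.rank_def]
  refine ciSup_le' ?_
  rintro ⟨s, hs⟩
  choose a ha using fun x : s => Ideal.Quotient.mk_surjective (I := J) (x : (MvPolynomial (Fin n) K ⧸ 𝔞) ⧸ J)
  have hv : LinearIndependent (FractionRing (MvPolynomial (Fin m) K)) (fun x : s => algebraMap (MvPolynomial (Fin n) K ⧸ 𝔞) (Localization (secS 𝔞 f)) (a x)) := by
    rw [linearIndependent_iff']
    intro t lam hsum x hx
    obtain ⟨b, hb⟩ := IsLocalization.exist_integer_multiples
      (nonZeroDivisors (MvPolynomial (Fin m) K)) t lam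
    have hchoice : ∀ y : s, ∃ p : MvPolynomial (Fin m) K,
        y ∈ t → algebraMap (MvPolynomial (Fin m) K) (FractionRing (MvPolynomial (Fin m) K)) p = (b : MvPolynomial (Fin m) K) • lam y := by
      intro y
      by_cases hy : y ∈ t
      · obtain ⟨p, hp⟩ := hb y hy
        exact ⟨p, fun _ => hp⟩
      · exact ⟨0, fun h => absurd h hy⟩
    choose p hp using hchoice
    have hsum2 : algebraMap (MvPolynomial (Fin n) K ⧸ 𝔞) (Localization (secS 𝔞 f)) (∑ y ∈ t, secPhi 𝔞 f (p y) * a y) = 0 := by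
      rw [map_sum]
      have h4 : ∀ y ∈ t, algebraMap (MvPolynomial (Fin n) K ⧸ 𝔞) (Localization (secS 𝔞 f)) (secPhi 𝔞 f (p y) * a y)
          = algebraMap (FractionRing (MvPolynomial (Fin m) K)) (Localization (secS 𝔞 f)) (algebraMap (MvPolynomial (Fin m) K) (FractionRing (MvPolynomial (Fin m) K)) b)
            * (lam y • algebraMap (MvPolynomial (Fin n) K ⧸ 𝔞) (Localization (secS 𝔞 f)) (a y)) := by
        intro y hy
        calc algebraMap (MvPolynomial (Fin n) K ⧸ 𝔞) (Localization (secS 𝔞 f)) (secPhi 𝔞 f (p y) * a y)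
            = algebraMap (MvPolynomial (Fin n) K ⧸ 𝔞) (Localization (secS 𝔞 f)) (secPhi 𝔞 f (p y)) * algebraMap (MvPolynomial (Fin n) K ⧸ 𝔞) (Localization (secS 𝔞 f)) (a y) := map_mul _ _ _
          _ = algebraMap (FractionRing (MvPolynomial (Fin m) K)) (Localization (secS 𝔞 f)) (algebraMap (MvPolynomial (Fin m) K) (FractionRing (MvPolynomial (Fin m) K)) (p y))
                * algebraMap (MvPolynomial (Fin n) K ⧸ 𝔞) (Localization (secS 𝔞 f)) (a y) := by rw [secFrac_algebraMap]
          _ = algebraMap (FractionRing (MvPolynomial (Fin m) K)) (Localization (secS 𝔞 f)) ((b : MvPolynomial (Fin m) K) • lam y)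
                * algebraMap (MvPolynomial (Fin n) K ⧸ 𝔞) (Localization (secS 𝔞 f)) (a y) := by rw [hp y hy]
          _ = algebraMap (FractionRing (MvPolynomial (Fin m) K)) (Localization (secS 𝔞 f)) (algebraMap (MvPolynomial (Fin m) K) (FractionRing (MvPolynomial (Fin m) K)) b * lam y)
                * algebraMap (MvPolynomial (Fin n) K ⧸ 𝔞) (Localization (secS 𝔞 f)) (a y) := by rw [Algebra.smul_def]
          _ = algebraMap (FractionRing (MvPolynomial (Fin m) K)) (Localization (secS 𝔞 f)) (algebraMap (MvPolynomial (Fin m) K) (FractionRing (MvPolynomial (Fin m) K)) b)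
                * (lam y • algebraMap (MvPolynomial (Fin n) K ⧸ 𝔞) (Localization (secS 𝔞 f)) (a y)) := by
              rw [Algebra.smul_def (lam y)
                (algebraMap (MvPolynomial (Fin n) K ⧸ 𝔞) (Localization (secS 𝔞 f)) (a y)),
                map_mul, mul_assoc]
      rw [Finset.sum_congr rfl h4, ← Finset.mul_sum, hsum, mul_zero]
    obtain ⟨c, hc⟩ := (IsLocalization.map_eq_zero_iff (secS 𝔞 f) (Localization (secS 𝔞 f)) _).mp hsum2
    obtain ⟨q, hq0, hqc⟩ := c.2
    have hrelA : ∑ y : t, secPhi 𝔞 f (q * p y) * a y = 0 := by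
      rw [Finset.sum_coe_sort t (fun y => secPhi 𝔞 f (q * p y) * a y)]
      calc ∑ y ∈ t, secPhi 𝔞 f (q * p y) * a y
          = secPhi 𝔞 f q * ∑ y ∈ t, secPhi 𝔞 f (p y) * a y := by
            rw [Finset.mul_sum]
            refine Finset.sum_congr rfl fun y hy => ?_
            rw [map_mul, mul_assoc]
        _ = 0 := by rw [hqc]; exact hc
    have hindt : LinearIndependent K fun y : t => Ideal.Quotient.mk J (a y) := by
      have heq : (fun y : t => Ideal.Quotient.mk J (a (y : s)))
          = fun y : t => ((y : s) : (MvPolynomial (Fin n) K ⧸ 𝔞) ⧸ J) := funext fun y => ha (y : s)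
      rw [heq]
      exact hs.comp (fun y : t => (y : s)) Subtype.val_injective
    have hkey := aux_key K m (MvPolynomial (Fin n) K ⧸ 𝔞) g hgreg ↥t (fun y => a y) hindt (fun y => q * p y) ?relation
    case relation =>
      exact hrelA
    have hpx : p x = 0 := by
      have h1 := hkey ⟨x, hx⟩
      rcases mul_eq_zero.mp h1 with h | h
      · exact absurd h hq0
      · exact h
    have h2 := hp x hx
    rw [hpx, map_zero] at h2
    rw [Algebra.smul_def] at h2
    have hb0 : algebraMap (MvPolynomial (Fin m) K) (FractionRing (MvPolynomial (Fin m) K)) (b : MvPolynomial (Fin m) K) ≠ 0 :=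
      (map_ne_zero_iff _ (IsFractionRing.injective _ _)).mpr
        (mem_nonZeroDivisors_iff_ne_zero.mp b.2)
    rcases mul_eq_zero.mp h2.symm with h | h
    · exact absurd h hb0
    · exact h
  exact hv.cardinal_le_rank


end
end

section
/- Let 𝔞 and 𝔟 be equidimensional ideals of K[X₁,…,Xₙ] of the same dimension m with 𝔞 ⊆ 𝔟. Then deg(𝔟) ≤ deg(𝔞), where deg is defined as Σⱼ deg V(𝔭ⱼ)·ℓⱼ over the (isolated) primes 𝔭ⱼ of the respective ideal, ℓⱼ being the length of the localized Artinian ring at 𝔭ⱼ. -/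
open MvPolynomial

/-- The affine-linear polynomials (degree one polynomials) determined by a coefficient
matrix `c`: `linForm c i = c(i,1)·X₁ + ⋯ + c(i,n)·Xₙ + c(i,0)`. -/
noncomputable def linForms {K : Type*} [Field K] {n : ℕ} (m : ℕ)
    (c : Fin m × Fin (n + 1) → K) (i : Fin m) : MvPolynomial (Fin n) K :=
  (∑ j : Fin n, MvPolynomial.C (c (i, j.succ)) * MvPolynomial.X j)
    + MvPolynomial.C (c (i, 0))

/-- `IsDegree 𝔠 m D` expresses that the ideal `𝔠` of `K[X₁,…,Xₙ]` (of dimension `m`) has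
degree `D` in the sense of Definition `degree-primary` i): for a generic choice (i.e. on a
nonempty Zariski open subset of the coefficient space, here a distinguished open set
`{h ≠ 0}`) of `m` affine-linear polynomials `f₁,…,f_m`,
`dim_K K[X]/(𝔠 + (f₁,…,f_m)) = D`. -/
noncomputable def IsDegree {K : Type*} [Field K] {n : ℕ}
    (𝔠 : Ideal (MvPolynomial (Fin n) K)) (m D : ℕ) : Prop :=
  ∃ h : MvPolynomial (Fin m × Fin (n + 1)) K, h ≠ 0 ∧
    ∀ c : Fin m × Fin (n + 1) → K, MvPolynomial.eval c h ≠ 0 →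
      Module.finrank K
        (MvPolynomial (Fin n) K ⧸ (𝔠 ⊔ Ideal.span (Set.range (linForms m c)))) = D

/-!
A generic affine-linear form avoids every minimal prime of an ideal `I` of `K[X]`: over an
infinite field a proper prime contains at most one of the translates `L + x`, `x ∈ K`, of a
polynomial `L`. Cutting by a form that avoids the minimal primes drops the Krull dimension of the
quotient by one, so for generic `f₁, …, f_m` the ring `K[X]/(𝔞 + (f₁, …, f_m))` has dimension `0`
and is therefore finite dimensional over `K`. It surjects onto `K[X]/(𝔟 + (f₁, …, f_m))`, and
the two genericity conditions can be met simultaneously by a single coefficient vector.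
-/

theorem WithBot.le_zero_of_add_natCast_le {d : WithBot ℕ∞} {m : ℕ} (h : d + m ≤ m) : d ≤ 0 := by
  induction d using WithBot.recBotCoe with
  | bot => exact bot_le
  | coe d =>
    have h' : d + m ≤ 0 + m := by rw [zero_add]; exact_mod_cast h
    exact_mod_cast WithTop.le_of_add_le_add_right (ENat.natCast_ne_top m) h'

section KrullDim

variable {R : Type*} [CommRing R]

theorem ringKrullDim_quotient_le_of_forall_mem_minimalPrimes {I : Ideal R} {d : WithBot ℕ∞}
    (h : ∀ p ∈ I.minimalPrimes, ringKrullDim (R ⧸ p) ≤ d) : ringKrullDim (R ⧸ I) ≤ d := by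
  rw [ringKrullDim_quotient]
  refine iSup_le fun l => ?_
  obtain ⟨p, hp, hpl⟩ := Ideal.exists_minimalPrimes_le
    ((PrimeSpectrum.mem_zeroLocus _ _).mp l.head.2 : I ≤ l.head.1.asIdeal)
  let l' : LTSeries (PrimeSpectrum.zeroLocus (R := R) p) :=
    { length := l.length
      toFun := fun i =>
        ⟨(l i).1, (PrimeSpectrum.mem_zeroLocus _ _).mpr (hpl.trans (l.head_le i))⟩
      step := l.step }
  calc (l.length : WithBot ℕ∞) = l'.length := rfl
    _ ≤ Order.krullDim (PrimeSpectrum.zeroLocus (R := R) p) :=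
      Order.LTSeries.length_le_krullDim l'
    _ = ringKrullDim (R ⧸ p) := (ringKrullDim_quotient p).symm
    _ ≤ d := h p hp

theorem ringKrullDim_quotient_sup_span_singleton_add_one_le {I : Ideal R} {x : R}
    (hx : ∀ p ∈ I.minimalPrimes, x ∉ p) :
    ringKrullDim (R ⧸ (I ⊔ Ideal.span {x})) + 1 ≤ ringKrullDim (R ⧸ I) := by
  rw [ringKrullDim_quotient, ringKrullDim_quotient]
  cases isEmpty_or_nonempty (PrimeSpectrum.zeroLocus (R := R) ↑(I ⊔ Ideal.span {x})) with
  | inl hempty => simp [Order.krullDim_eq_bot]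
  | inr hne =>
    let ι := Set.inclusion
      (PrimeSpectrum.zeroLocus_anti_mono_ideal (le_sup_left : I ≤ I ⊔ Ideal.span {x}))
    have : Nonempty (PrimeSpectrum.zeroLocus (R := R) I) := hne.map ι
    rw [Order.krullDim_eq_iSup_length, Order.krullDim_eq_iSup_length, ← WithBot.coe_one,
      ← WithBot.coe_add, ENat.iSup_add, WithBot.coe_le_coe, iSup_le_iff]
    intro l
    have hhead : I ⊔ Ideal.span {x} ≤ l.head.1.asIdeal :=
      (PrimeSpectrum.mem_zeroLocus _ _).mp l.head.2
    -- a minimal prime of `I` below the head of `l` misses `x`, so it extends `l` by one step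
    obtain ⟨p, hp, hpl⟩ := Ideal.exists_minimalPrimes_le (le_sup_left.trans hhead)
    let p' : PrimeSpectrum.zeroLocus (R := R) I :=
      ⟨⟨p, hp.1.1⟩, (PrimeSpectrum.mem_zeroLocus _ _).mpr hp.1.2⟩
    have hlt : p' < ι l.head := lt_of_le_of_ne hpl fun h => hx p hp <| by
      rw [show p = l.head.1.asIdeal from congrArg (fun q => q.1.asIdeal) h]
      exact hhead (Ideal.mem_sup_right (Ideal.mem_span_singleton_self x))
    refine le_trans ?_ (le_iSup _ ((LTSeries.map l ι fun _ _ h => h).cons p' hlt))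
    simp [RelSeries.cons, RelSeries.singleton, LTSeries.map]

end KrullDim

section Field

variable {K : Type*} [Field K]

theorem Ideal.subsingleton_setOf_add_algebraMap_mem {A : Type*} [CommRing A] [Algebra K A]
    (p : Ideal A) [p.IsPrime] (a : A) : {x : K | a + algebraMap K A x ∈ p}.Subsingleton := by
  intro x hx y hy
  by_contra hxy
  have hmem : algebraMap K A (x - y) ∈ p := by
    simpa only [map_sub, add_sub_add_left_eq_sub] using p.sub_mem hx hy
  exact Ideal.IsPrime.ne_top ‹_› <| p.eq_top_of_isUnit_mem hmem
    ((sub_ne_zero.mpr hxy).isUnit.map (algebraMap K A))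

theorem Ideal.finite_setOf_exists_mem_minimalPrimes_add_algebraMap_mem {A : Type*} [CommRing A]
    [Algebra K A] [IsNoetherianRing A] (I : Ideal A) (a : A) :
    {x : K | ∃ p ∈ I.minimalPrimes, a + algebraMap K A x ∈ p}.Finite := by
  refine (I.finite_minimalPrimes_of_isNoetherianRing.biUnion fun p hp => ?_).subset
    fun x ⟨p, hp, hx⟩ => Set.mem_biUnion hp hx
  have : p.IsPrime := hp.1.1
  exact (p.subsingleton_setOf_add_algebraMap_mem a).finite

theorem MvPolynomial.exists_eval_ne_zero [Infinite K] {σ : Type*} {h : MvPolynomial σ K}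
    (hh : h ≠ 0) : ∃ c : σ → K, eval c h ≠ 0 := by
  by_contra! hc
  exact hh (MvPolynomial.funext fun c => by simp [hc c])

theorem MvPolynomial.eval_aeval_update_X {σ : Type*} [DecidableEq σ] (h : MvPolynomial σ K)
    (c : σ → K) (s : σ) (x : K) :
    (aeval (Function.update (fun t => Polynomial.C (c t)) s Polynomial.X) h).eval x =
      eval (Function.update c s x) h := by
  rw [← Polynomial.coe_aeval_eq_eval, ← AlgHom.comp_apply, comp_aeval, ← coe_aeval_eq_eval]
  refine congrArg (fun g => aeval g h) (_root_.funext fun t => ?_)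
  rcases eq_or_ne t s with rfl | hts
  · simp
  · simp [Function.update_of_ne hts]

theorem MvPolynomial.exists_notMem_eval_update_ne_zero [Infinite K] {σ : Type*} [DecidableEq σ]
    {h : MvPolynomial σ K} {c : σ → K} (hc : eval c h ≠ 0) (s : σ) {B : Set K} (hB : B.Finite) :
    ∃ x ∉ B, eval (Function.update c s x) h ≠ 0 := by
  obtain ⟨q, hq⟩ : ∃ q : Polynomial K, ∀ x, q.eval x = eval (Function.update c s x) h :=
    ⟨_, eval_aeval_update_X h c s⟩
  have hq0 : q ≠ 0 := fun h0 => hc <| by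
    rw [← Function.update_eq_self s c, ← hq, h0, Polynomial.eval_zero]
  obtain ⟨x, hx⟩ := (hB.union (Polynomial.finite_setOfPred_isRoot hq0)).infinite_compl.nonempty
  simp only [Set.mem_compl_iff, Set.mem_union, not_or] at hx
  exact ⟨x, hx.1, by rw [← hq]; exact hx.2⟩

end Field

section HyperplaneSection

variable {K : Type*} [Field K] {n m : ℕ}

theorem linForms_update_of_ne {c : Fin m × Fin (n + 1) → K} {i k : Fin m} (hik : i ≠ k)
    (j : Fin (n + 1)) (x : K) : linForms m (Function.update c (k, j) x) i = linForms m c i := by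
  simp [linForms, hik]

theorem linForms_update_self_zero (c : Fin m × Fin (n + 1) → K) (k : Fin m) (x : K) :
    linForms m (Function.update c (k, 0) x) k = (linForms m c k - C (c (k, 0))) + C x := by
  simp [linForms, Fin.succ_ne_zero]

noncomputable def hyperplaneSection (𝔞 : Ideal (MvPolynomial (Fin n) K))
    (c : Fin m × Fin (n + 1) → K) (t : ℕ) : Ideal (MvPolynomial (Fin n) K) :=
  𝔞 ⊔ Ideal.span (linForms m c '' {i | (i : ℕ) < t})

variable (𝔞 : Ideal (MvPolynomial (Fin n) K)) (c : Fin m × Fin (n + 1) → K)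

theorem hyperplaneSection_zero : hyperplaneSection 𝔞 c 0 = 𝔞 := by
  simp [hyperplaneSection]

theorem hyperplaneSection_self :
    hyperplaneSection 𝔞 c m = 𝔞 ⊔ Ideal.span (Set.range (linForms m c)) := by
  simp [hyperplaneSection, ← Set.image_univ]

theorem hyperplaneSection_succ (k : Fin m) :
    hyperplaneSection 𝔞 c (k + 1) = hyperplaneSection 𝔞 c k ⊔ Ideal.span {linForms m c k} := by
  have : {i : Fin m | (i : ℕ) < k + 1} = insert k {i : Fin m | (i : ℕ) < k} := by
    ext i; simp [le_iff_eq_or_lt, Fin.ext_iff]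
  rw [hyperplaneSection, hyperplaneSection, this, Set.image_insert_eq, Ideal.span_insert,
    sup_left_comm, sup_comm (Ideal.span _), sup_assoc]

theorem hyperplaneSection_update (k : Fin m) (j : Fin (n + 1)) (x : K) :
    hyperplaneSection 𝔞 (Function.update c (k, j) x) k = hyperplaneSection 𝔞 c k := by
  refine congrArg (𝔞 ⊔ Ideal.span ·) (Set.image_congr fun i hi => ?_)
  exact linForms_update_of_ne (Fin.ne_of_lt hi) j x

variable {c} [Infinite K]

theorem exists_eval_update_ne_zero_ringKrullDim_hyperplaneSection_succ_add_one_le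
    {h : MvPolynomial (Fin m × Fin (n + 1)) K} (hc : eval c h ≠ 0) (k : Fin m) :
    ∃ x : K, eval (Function.update c (k, 0) x) h ≠ 0 ∧
      ringKrullDim (MvPolynomial (Fin n) K ⧸
          hyperplaneSection 𝔞 (Function.update c (k, 0) x) (k + 1)) + 1 ≤
        ringKrullDim (MvPolynomial (Fin n) K ⧸ hyperplaneSection 𝔞 c k) := by
  obtain ⟨x, hxB, hx⟩ := exists_notMem_eval_update_ne_zero hc (k, 0)
    ((hyperplaneSection 𝔞 c k).finite_setOf_exists_mem_minimalPrimes_add_algebraMap_mem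
      (linForms m c k - C (c (k, 0))))
  refine ⟨x, hx, ?_⟩
  rw [hyperplaneSection_succ, hyperplaneSection_update]
  refine ringKrullDim_quotient_sup_span_singleton_add_one_le fun p hp hmem => hxB ⟨p, hp, ?_⟩
  rwa [linForms_update_self_zero] at hmem

variable {𝔞}

theorem exists_eval_ne_zero_ringKrullDim_hyperplaneSection_add_le
    (h𝔞 : ringKrullDim (MvPolynomial (Fin n) K ⧸ 𝔞) ≤ m)
    {h : MvPolynomial (Fin m × Fin (n + 1)) K} (hh : h ≠ 0) :
    ∀ t ≤ m, ∃ c, eval c h ≠ 0 ∧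
      ringKrullDim (MvPolynomial (Fin n) K ⧸ hyperplaneSection 𝔞 c t) + t ≤ m := by
  intro t
  induction t with
  | zero =>
    obtain ⟨c, hc⟩ := exists_eval_ne_zero hh
    exact fun _ => ⟨c, hc, by rw [hyperplaneSection_zero]; simpa using h𝔞⟩
  | succ t ih =>
    intro ht
    obtain ⟨c, hc, hdim⟩ := ih (by omega)
    obtain ⟨x, hx, hstep⟩ :=
      exists_eval_update_ne_zero_ringKrullDim_hyperplaneSection_succ_add_one_le 𝔞 hc ⟨t, ht⟩
    refine ⟨_, hx, ?_⟩
    calc _ = ringKrullDim (MvPolynomial (Fin n) K ⧸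
            hyperplaneSection 𝔞 (Function.update c (⟨t, ht⟩, 0) x) (t + 1)) + 1 + t := by
          push_cast; ring
      _ ≤ _ := by gcongr
      _ ≤ m := hdim

theorem exists_eval_ne_zero_finiteDimensional_quotient_sup_span_linForms
    (h𝔞 : ringKrullDim (MvPolynomial (Fin n) K ⧸ 𝔞) ≤ m)
    {h : MvPolynomial (Fin m × Fin (n + 1)) K} (hh : h ≠ 0) :
    ∃ c, eval c h ≠ 0 ∧ FiniteDimensional K
      (MvPolynomial (Fin n) K ⧸ (𝔞 ⊔ Ideal.span (Set.range (linForms m c)))) := by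
  obtain ⟨c, hc, hdim⟩ := exists_eval_ne_zero_ringKrullDim_hyperplaneSection_add_le h𝔞 hh m le_rfl
  refine ⟨c, hc, (Module.finite_iff_krullDimLE_zero K _).mpr ⟨?_⟩⟩
  rw [← hyperplaneSection_self]
  exact WithBot.le_zero_of_add_natCast_le hdim

end HyperplaneSection

theorem degree_antitone_general {K : Type*} [Field K] [CharZero K] {n m : ℕ}
    (𝔞 𝔟 : Ideal (MvPolynomial (Fin n) K))
    (hequia : ∀ 𝔭 ∈ 𝔞.minimalPrimes,
      ringKrullDim (MvPolynomial (Fin n) K ⧸ 𝔭) = (m : WithBot ℕ∞))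
    (hab : 𝔞 ≤ 𝔟) (Da Db : ℕ) (hDa : IsDegree 𝔞 m Da) (hDb : IsDegree 𝔟 m Db) :
    Db ≤ Da := by
  obtain ⟨ha, ha0, Ha⟩ := hDa
  obtain ⟨hb, hb0, Hb⟩ := hDb
  obtain ⟨c, hc, hfin⟩ := exists_eval_ne_zero_finiteDimensional_quotient_sup_span_linForms
    (ringKrullDim_quotient_le_of_forall_mem_minimalPrimes fun p hp => (hequia p hp).le)
    (mul_ne_zero ha0 hb0)
  rw [map_mul] at hc
  rw [← Ha c (left_ne_zero_of_mul hc), ← Hb c (right_ne_zero_of_mul hc)]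
  have hle : 𝔞 ⊔ Ideal.span (Set.range (linForms m c)) ≤
      𝔟 ⊔ Ideal.span (Set.range (linForms m c)) := sup_le_sup_right hab _
  exact (Ideal.Quotient.factorₐ K hle).toLinearMap.finrank_le_finrank_of_surjective
    (Ideal.Quotient.factor_surjective hle)

/-- Proposition `subset`: If `𝔞 ⊆ 𝔟` are equidimensional ideals of the
same dimension `m`, then `deg 𝔟 ≤ deg 𝔞`. -/
theorem degree_antitone {K : Type*} [Field K] [IsAlgClosed K] [CharZero K] {n m : ℕ}
    (𝔞 𝔟 : Ideal (MvPolynomial (Fin n) K)) (h𝔞 : 𝔞 ≠ ⊤) (h𝔟 : 𝔟 ≠ ⊤)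
    (hequia : ∀ 𝔭 ∈ 𝔞.minimalPrimes,
      ringKrullDim (MvPolynomial (Fin n) K ⧸ 𝔭) = (m : WithBot ℕ∞))
    (hequib : ∀ 𝔭 ∈ 𝔟.minimalPrimes,
      ringKrullDim (MvPolynomial (Fin n) K ⧸ 𝔭) = (m : WithBot ℕ∞))
    (hab : 𝔞 ≤ 𝔟) (Da Db : ℕ) (hDa : IsDegree 𝔞 m Da) (hDb : IsDegree 𝔟 m Db) :
    Db ≤ Da :=
  degree_antitone_general 𝔞 𝔟 hequia hab Da Db hDa hDb
end
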